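/- No ≥2-subdivision of K₄ (the complete graph on four vertices) is a restricted frame graph. -/

import Mathlib

/-! ## Frames and restricted frame graphs -/

/-- An axis-parallel box in `ℝ²`, i.e. a product `[x1,x2] × [y1,y2]` of two closed
nondegenerate intervals. -/
structure Box : Type where
  x1 : ℝ
  x2 : ℝ
  y1 : ℝ
  y2 : ℝ
  hx : x1 < x2
  hy : y1 < y2

namespace Box

/-- The region bounded by the frame of a box: the closed box itself. -/
def region (B : Box) : Set (ℝ × ℝ) :=
  {p : ℝ × ℝ | B.x1 ≤ p.1 ∧ p.1 ≤ B.x2 ∧ B.y1 ≤ p.2 ∧ p.2 ≤ B.y2}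

/-- The frame of a box: the topological boundary of the closed box. -/
def frame (B : Box) : Set (ℝ × ℝ) :=
  {p : ℝ × ℝ | p ∈ B.region ∧ (p.1 = B.x1 ∨ p.1 = B.x2 ∨ p.2 = B.y1 ∨ p.2 = B.y2)}

/-- The left side `{x1} × [y1,y2]` of a frame. -/
def leftSide (B : Box) : Set (ℝ × ℝ) :=
  {p : ℝ × ℝ | p.1 = B.x1 ∧ B.y1 ≤ p.2 ∧ p.2 ≤ B.y2}

/-- The right side `{x2} × [y1,y2]` of a frame. -/
def rightSide (B : Box) : Set (ℝ × ℝ) :=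
  {p : ℝ × ℝ | p.1 = B.x2 ∧ B.y1 ≤ p.2 ∧ p.2 ≤ B.y2}

/-- The top side `[x1,x2] × {y2}` of a frame. -/
def topSide (B : Box) : Set (ℝ × ℝ) :=
  {p : ℝ × ℝ | p.2 = B.y2 ∧ B.x1 ≤ p.1 ∧ p.1 ≤ B.x2}

/-- The bottom side `[x1,x2] × {y1}` of a frame. -/
def bottomSide (B : Box) : Set (ℝ × ℝ) :=
  {p : ℝ × ℝ | p.2 = B.y1 ∧ B.x1 ≤ p.1 ∧ p.1 ≤ B.x2}

/-- The four corners of a frame. -/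
def corners (B : Box) : Set (ℝ × ℝ) :=
  {(B.x1, B.y1), (B.x1, B.y2), (B.x2, B.y1), (B.x2, B.y2)}

/-- `Box.Inside inner outer` : the frame of `outer` contains the frame of `inner`,
i.e. the two frames are disjoint and the frame of `inner` is contained in the region
bounded by the frame of `outer`. -/
def Inside (inner outer : Box) : Prop :=
  inner.frame ∩ outer.frame = ∅ ∧ inner.frame ⊆ outer.region

/-- `Box.Outside B outer` : the frames are disjoint and `B` is not inside `outer`. -/
def Outside (B outer : Box) : Prop :=
  B.frame ∩ outer.frame = ∅ ∧ ¬ Inside B outer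

end Box

/-- A family of frames `(F v)` is a representation of the graph `G` as a restricted
frame graph: distinct vertices are adjacent iff their frames intersect, and the four
restrictions on the representation hold. -/
structure IsFrameRepresentation {V : Type} (G : SimpleGraph V) (F : V → Box) : Prop where
  /-- Distinct vertices are adjacent iff their frames intersect. -/
  adj_iff : ∀ u v : V, u ≠ v → (G.Adj u v ↔ ((F u).frame ∩ (F v).frame).Nonempty)
  /-- (1) Corners of a frame do not coincide with any point of another frame. -/
  corner_free : ∀ u v : V, u ≠ v → (F u).corners ∩ (F v).frame = ∅
  /-- (2) The left side of a frame does not intersect any other frame. -/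
  left_free : ∀ u v : V, u ≠ v → (F u).leftSide ∩ (F v).frame = ∅
  /-- (3) If the right side of a frame intersects a second frame, this right side
  intersects both the top and the bottom side of that second frame. -/
  right_cross : ∀ u v : V, u ≠ v →
    ((F u).rightSide ∩ (F v).frame).Nonempty →
    ((F u).rightSide ∩ (F v).topSide).Nonempty ∧
      ((F u).rightSide ∩ (F v).bottomSide).Nonempty
  /-- (4) If two frames intersect, no third frame is entirely contained in the
  intersection of the regions bounded by the two frames. -/
  not_nested : ∀ u v w : V, u ≠ v → w ≠ u → w ≠ v →
    ((F u).frame ∩ (F v).frame).Nonempty →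
    ¬ ((F w).frame ⊆ (F u).region ∩ (F v).region)

/-- A graph is a restricted frame graph if it admits a frame representation. -/
def IsRestrictedFrameGraph {V : Type} (G : SimpleGraph V) : Prop :=
  ∃ F : V → Box, IsFrameRepresentation G F

/-! ## Basic graph notions -/

/-- The closed neighborhood `N[u] = {u} ∪ N(u)`. -/
def closedNbhd {V : Type} (G : SimpleGraph V) (u : V) : Set V :=
  insert u (G.neighborSet u)

/-- `G` has a full star-cutset: for some vertex `u` the removal of `N[u]`
disconnects `G`. -/
def HasFullStarCutset {V : Type} (G : SimpleGraph V) : Prop :=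
  ∃ u : V, ¬ (G.induce ((closedNbhd G u)ᶜ)).Preconnected

/-- `v` is a cut-vertex of `G`: its removal disconnects `G`. -/
def IsCutVertex {V : Type} (G : SimpleGraph V) (v : V) : Prop :=
  ¬ (G.induce {u : V | u ≠ v}).Preconnected

/-- `G` is a path graph: its vertices can be enumerated `0, …, n-1` so that two
vertices are adjacent iff they are consecutive. -/
def IsPathGraph {V : Type} (G : SimpleGraph V) : Prop :=
  ∃ (n : ℕ) (e : V ≃ Fin n), ∀ u v : V,
    G.Adj u v ↔ ((e u : ℕ) + 1 = (e v : ℕ) ∨ (e v : ℕ) + 1 = (e u : ℕ))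

/-- `G` is a cycle graph (on at least 3 vertices). -/
def IsCycleGraphOn {V : Type} (G : SimpleGraph V) : Prop :=
  ∃ n : ℕ, 3 ≤ n ∧ ∃ e : V ≃ Fin n, ∀ u v : V,
    G.Adj u v ↔ (((e u : ℕ) + 1) % n = (e v : ℕ) ∨ ((e v : ℕ) + 1) % n = (e u : ℕ))

/-- `x` is a leaf of `T`: it has exactly one neighbor. -/
def IsLeaf {V : Type} (T : SimpleGraph V) (x : V) : Prop :=
  (T.neighborSet x).ncard = 1

/-- `G` is a chandelier with pivot `v`: `G - v` is a tree `T` and `v` is adjacent to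
exactly the leaves of `T`. -/
def IsChandelierWithPivot {V : Type} (G : SimpleGraph V) (v : V) : Prop :=
  (G.induce {u : V | u ≠ v}).IsTree ∧
    ∀ u : ↥{u : V | u ≠ v}, (G.Adj v u.val ↔ IsLeaf (G.induce {u : V | u ≠ v}) u)

/-- `G` is a chandelier. -/
def IsChandelier {V : Type} (G : SimpleGraph V) : Prop :=
  ∃ v : V, IsChandelierWithPivot G v

/-- `G` is a luxury chandelier: a chandelier (with pivot `v` and tree `T = G - v`)
such that the neighbor in `T` of each leaf of `T` has degree 2 in `T`. -/
def IsLuxuryChandelier {V : Type} (G : SimpleGraph V) : Prop :=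
  ∃ v : V, IsChandelierWithPivot G v ∧
    ∀ x y : ↥{u : V | u ≠ v}, (G.induce {u : V | u ≠ v}).Adj x y →
      IsLeaf (G.induce {u : V | u ≠ v}) x →
      ((G.induce {u : V | u ≠ v}).neighborSet y).ncard = 2

/-! ## Multigraphs and subdivisions -/

/-- A loopless multigraph on vertex set `V`: a symmetric multiplicity function. -/
structure Multigraph (V : Type) where
  m : V → V → ℕ
  symm : ∀ u v : V, m u v = m v u
  loopless : ∀ v : V, m v v = 0

/-- The multigraph associated with a simple graph (each edge has multiplicity 1). -/
noncomputable def SimpleGraph.toMultigraph {V : Type} (G : SimpleGraph V) : Multigraph V where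
  m u v := @ite ℕ (G.Adj u v) (Classical.dec _) 1 0
  symm u v := by
    beta_reduce
    by_cases h : G.Adj u v
    · rw [if_pos h, if_pos (G.adj_symm h)]
    · rw [if_neg h, if_neg (fun h' => h (G.adj_symm h'))]
  loopless v := by
    beta_reduce
    rw [if_neg (G.loopless.irrefl v)]

/-- The interior (set of internal vertices) of a walk. -/
def walkInterior {V : Type} {G : SimpleGraph V} {a b : V} (p : G.Walk a b) : Set V :=
  {w : V | w ∈ p.support ∧ w ≠ a ∧ w ≠ b}

/-- A witness that the simple graph `H` is a `≥k`-subdivision of the multigraph `G`: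
each edge of `G` (counted with multiplicity) is replaced by a path with at least
`k+1` edges between (the images of) its endpoints, these paths being internally
disjoint from each other and from the branch vertices, and covering all of `H`. -/
structure MultiSubdivision {V W : Type} (G : Multigraph V) (H : SimpleGraph W) (k : ℕ) where
  /-- the embedding of branch vertices -/
  f : V ↪ W
  /-- the path replacing the `i`-th parallel edge between `u` and `v` -/
  path : ∀ u v : V, Fin (G.m u v) → H.Walk (f u) (f v)
  path_symm : ∀ (u v : V) (i : Fin (G.m u v)),
    path v u (Fin.cast (G.symm u v) i) = (path u v i).reverse
  path_ne : ∀ (u v : V) (i i' : Fin (G.m u v)), (i : ℕ) ≠ (i' : ℕ) →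
    path u v i ≠ path u v i'
  isPath : ∀ (u v : V) (i : Fin (G.m u v)), (path u v i).IsPath
  length_le : ∀ (u v : V) (i : Fin (G.m u v)), k + 1 ≤ (path u v i).length
  /-- the paths are internally disjoint from the branch vertices -/
  interior_avoid : ∀ (u v : V) (i : Fin (G.m u v)) (x : V),
    f x ∉ walkInterior (path u v i)
  /-- distinct paths are pairwise internally disjoint -/
  interior_disjoint : ∀ (u v : V) (i : Fin (G.m u v)) (u' v' : V) (i' : Fin (G.m u' v')),
    (walkInterior (path u v i) ∩ walkInterior (path u' v' i')).Nonempty →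
    (u = u' ∧ v = v' ∧ (i : ℕ) = (i' : ℕ)) ∨ (u = v' ∧ v = u' ∧ (i : ℕ) = (i' : ℕ))
  /-- every vertex of `H` is a branch vertex or an internal vertex of a path -/
  vertex_cover : ∀ w : W, (∃ x : V, f x = w) ∨
    ∃ (u v : V) (i : Fin (G.m u v)), w ∈ walkInterior (path u v i)
  /-- every edge of `H` lies on one of the paths -/
  edge_cover : ∀ e ∈ H.edgeSet, ∃ (u v : V) (i : Fin (G.m u v)), e ∈ (path u v i).edges

/-- `H` is a `≥k`-subdivision of the multigraph `G`. -/
def IsSubdivisionGE {V W : Type} (G : Multigraph V) (k : ℕ) (H : SimpleGraph W) : Prop :=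
  Nonempty (MultiSubdivision G H k)

/-- `H` is a subdivision of the simple graph `G` (every edge is replaced by a path
with at least one edge). -/
def IsSubdivision {V W : Type} (G : SimpleGraph V) (H : SimpleGraph W) : Prop :=
  IsSubdivisionGE G.toMultigraph 0 H

namespace Multigraph

/-- The underlying simple graph of a multigraph. -/
def support {V : Type} (G : Multigraph V) : SimpleGraph V where
  Adj u v := 0 < G.m u v
  symm := by
    refine ⟨?_⟩
    intro u v h
    rw [G.symm v u]
    exact h
  loopless := by
    refine ⟨?_⟩
    intro v h
    rw [G.loopless v] at h
    exact Nat.lt_irrefl 0 h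

/-- A multigraph is connected if its underlying simple graph is. -/
def Connected {V : Type} (G : Multigraph V) : Prop :=
  G.support.Connected

/-- A multigraph is 2-connected if it is connected, has at least two vertices, and
deleting any single vertex leaves it connected. -/
def TwoConnected {V : Type} (G : Multigraph V) : Prop :=
  G.support.Connected ∧ (∃ u v : V, u ≠ v) ∧
    ∀ v : V, (G.support.induce {u : V | u ≠ v}).Connected

/-- `v` is a feedback vertex of the multigraph `G`: `G - v` contains no cycle
(where a pair of parallel edges forms a cycle of length 2). -/
def IsFeedbackVertex {V : Type} (G : Multigraph V) (v : V) : Prop :=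
  (G.support.induce {u : V | u ≠ v}).IsAcyclic ∧
    ∀ u w : V, u ≠ v → w ≠ v → G.m u w ≤ 1

end Multigraph

/-! ## Induced cycles and big vertices -/

/-- `C` induces a cycle in `G`. -/
def IsInducedCycle {V : Type} (G : SimpleGraph V) (C : Set V) : Prop :=
  IsCycleGraphOn (G.induce C)

/-- `v` is a big vertex of the (induced cycle on) `C` with respect to the frame
representation `F`: `v ∈ C` and `F v` contains the frame of every vertex of `C`
outside `N[v]`. -/
def IsBigVertexOf {V : Type} (G : SimpleGraph V) (F : V → Box) (C : Set V) (v : V) : Prop :=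
  v ∈ C ∧ ∀ u ∈ C, u ≠ v → ¬ G.Adj v u → Box.Inside (F u) (F v)

/-- `v` is a big vertex of the representation `F`: it is a big vertex of some
induced cycle of `G`. -/
def IsBigVertex {V : Type} (G : SimpleGraph V) (F : V → Box) (v : V) : Prop :=
  ∃ C : Set V, IsInducedCycle G C ∧ IsBigVertexOf G F C v

/-! ## Gluing a chandelier onto a vertex -/

/-- The graph obtained from the disjoint union of `G₁` and `G₂` by identifying the
vertex `v` of `G₁` with the vertex `p` of `G₂`. -/
def glueAt {V₁ V₂ : Type} (G₁ : SimpleGraph V₁) (G₂ : SimpleGraph V₂) (v : V₁) (p : V₂) :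
    SimpleGraph (V₁ ⊕ {x : V₂ // x ≠ p}) :=
  SimpleGraph.fromRel (fun a b =>
    match a, b with
    | Sum.inl u, Sum.inl w => G₁.Adj u w
    | Sum.inr u, Sum.inr w => G₂.Adj u.val w.val
    | Sum.inl u, Sum.inr w => u = v ∧ G₂.Adj p w.val
    | Sum.inr _, Sum.inl _ => False)

/-! ## The multigraphs `Ĥ₁` and `Ĥ₂` -/

/-- The multiplicity matrix of `Ĥ₁` (vertices `a₁ = 0`, `b₁ = 1`, `v₁ = 2`, `v₂ = 3`,
`a₂ = 4`, `b₂ = 5`). -/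
def H1hatMatrix : Matrix (Fin 6) (Fin 6) ℕ :=
  !![0, 2, 1, 0, 0, 0;
     2, 0, 1, 0, 0, 0;
     1, 1, 0, 1, 0, 0;
     0, 0, 1, 0, 1, 1;
     0, 0, 0, 1, 0, 2;
     0, 0, 0, 1, 2, 0]

/-- The multigraph `Ĥ₁`: two disjoint digons `a₁b₁`, `a₂b₂`, and single edges
`a₁v₁`, `b₁v₁`, `v₁v₂`, `a₂v₂`, `b₂v₂`. -/
def H1hat : Multigraph (Fin 6) where
  m u v := H1hatMatrix u v
  symm := by intro u v; fin_cases u <;> fin_cases v <;> rfl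
  loopless := by decide

/-- The multiplicity matrix of `Ĥ₂` (vertices `a₁ = 0`, `b₁ = 1`, `v = 2`,
`a₂ = 3`, `b₂ = 4`). -/
def H2hatMatrix : Matrix (Fin 5) (Fin 5) ℕ :=
  !![0, 2, 1, 0, 0;
     2, 0, 1, 0, 0;
     1, 1, 0, 1, 1;
     0, 0, 1, 0, 2;
     0, 0, 1, 2, 0]

/-- The multigraph `Ĥ₂`: two digons `a₁b₁`, `a₂b₂`, and single edges
`a₁v`, `b₁v`, `a₂v`, `b₂v`. -/
def H2hat : Multigraph (Fin 5) where
  m u v := H2hatMatrix u v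
  symm := by intro u v; fin_cases u <;> fin_cases v <;> rfl
  loopless := by decide

/-! ## Subdivisions of `K₄` and their type -/

/-- The complete graph on four vertices. -/
def K4 : SimpleGraph (Fin 4) := ⊤

/-- The set of edges of `K₄` that are subdivided at least once in the subdivision
witnessed by `S` (i.e. replaced by a path with at least two edges). -/
def subdividedEdges {W : Type} {H : SimpleGraph W}
    (S : MultiSubdivision K4.toMultigraph H 0) : Set (Sym2 (Fin 4)) :=
  {e : Sym2 (Fin 4) | ∃ (u v : Fin 4) (i : Fin (K4.toMultigraph.m u v)),
    e = s(u, v) ∧ 2 ≤ (S.path u v i).length}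

/-! ## Adding a twin -/

/-- The graph obtained from `G` by adding a twin of `v`: a new vertex, non-adjacent
to `v`, whose neighborhood is exactly `N(v)`. -/
def addTwin {V : Type} (G : SimpleGraph V) (v : V) : SimpleGraph (V ⊕ Unit) :=
  SimpleGraph.fromRel (fun a b =>
    match a, b with
    | Sum.inl u, Sum.inl w => G.Adj u w
    | Sum.inr _, Sum.inl u => G.Adj v u
    | _, _ => False)

/-! ## The construction of Burling and Pawlik et al. -/

/-- A graph-stable set pair: a graph together with a collection of sets of vertices
(intended: stable sets). -/
structure GSPair : Type 1 where
  V : Type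
  G : SimpleGraph V
  S : Set (Set V)

namespace GSPair

/-- The vertex type of `next P`: the original vertices, the vertices `(s, u)` of the
copy `H_s` of the graph for each `s ∈ 𝒮`, and the new vertices `v_{s,t}`. -/
abbrev nextVertex (P : GSPair) : Type :=
  P.V ⊕ ((↥P.S × P.V) ⊕ (↥P.S × ↥P.S))

/-- The adjacency generator for the graph of `next P`. -/
def nextRel (P : GSPair) : P.nextVertex → P.nextVertex → Prop
  | Sum.inl u, Sum.inl v => P.G.Adj u v
  | Sum.inr (Sum.inl (s, u)), Sum.inr (Sum.inl (t, v)) => s = t ∧ P.G.Adj u v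
  | Sum.inr (Sum.inr (s, t)), Sum.inr (Sum.inl (s', v)) => s = s' ∧ v ∈ (t : Set P.V)
  | _, _ => False

/-- The procedure `next`: add a disjoint copy `H_s` of the graph for each `s ∈ 𝒮`, a
vertex `v_{s,t}` whose neighborhood is exactly the copy of `t` inside `H_s` for all
`s, t ∈ 𝒮`, and take as new collection of stable sets all `s ∪ t_s` and
`s ∪ {v_{s,t}}`. -/
def next (P : GSPair) : GSPair where
  V := P.nextVertex
  G := SimpleGraph.fromRel P.nextRel
  S := {A : Set P.nextVertex | ∃ s t : ↥P.S,
    A = (Sum.inl '' (s : Set P.V) : Set P.nextVertex) ∪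
        ((fun u : P.V => (Sum.inr (Sum.inl (s, u)) : P.nextVertex)) '' (t : Set P.V)) ∨
    A = (Sum.inl '' (s : Set P.V) : Set P.nextVertex) ∪ {Sum.inr (Sum.inr (s, t))}}

/-- The starting pair: a single vertex, with the single stable set consisting of
that vertex. -/
def base : GSPair := ⟨PUnit, ⊥, {Set.univ}⟩

/-- `P` is an induced subgraph-stable set pair of `Q`. -/
def IsInducedSubpair (P Q : GSPair) : Prop :=
  ∃ f : P.V ↪ Q.V, (∀ u v : P.V, P.G.Adj u v ↔ Q.G.Adj (f u) (f v)) ∧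
    ∀ A ∈ P.S, ∃ B ∈ Q.S, A = f ⁻¹' B

/-- A graph-stable set pair is constructible if it is an induced subgraph-stable set
pair of some iterate of `next` on the starting pair. -/
def Constructible (P : GSPair) : Prop :=
  ∃ i : ℕ, IsInducedSubpair P (next^[i] base)

end GSPair


/-!
In a restricted frame representation the frames of adjacent vertices cross: the right side of
one runs vertically through the other. On an induced cycle of length at least four, let `x` be the
vertex with the rightmost right side and `y`, `z` its neighbours. Both cross `F x` from the left,
so their regions share the bottom-left corner of `F x` while their frames are disjoint; hence one
of them, `u`, strictly contains the frame of a vertex outside `N[u]`. A `≥2`-subdivision `H` of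
`K₄` has no full star-cutset, so this containment spreads along `H - N[u]`: every vertex outside
`N[u]` has its frame strictly inside `F u`. Since for every vertex `v` some subdivided triangle of
`K₄` is an induced cycle avoiding `N[v]`, there are two such vertices `u`, `u'` outside each
other's closed neighbourhoods, and each of their frames would be strictly inside the other.
-/

lemma notMem_closedNbhd_iff {V : Type} {G : SimpleGraph V} {u v : V} :
    v ∉ closedNbhd G u ↔ v ≠ u ∧ ¬ G.Adj u v := by
  simp [closedNbhd]

lemma notMem_closedNbhd_comm {V : Type} {G : SimpleGraph V} {u v : V} :
    v ∉ closedNbhd G u ↔ u ∉ closedNbhd G v := by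
  simp only [notMem_closedNbhd_iff, ne_comm, G.adj_comm]

/-- The property of the vertex set of an induced cycle of length at least four that the argument
uses. -/
def SimpleGraph.CentersInducedCherries {V : Type} (G : SimpleGraph V) (C : Set V) : Prop :=
  ∀ x ∈ C, ∃ y ∈ C, ∃ z ∈ C, y ≠ z ∧ G.Adj x y ∧ G.Adj x z ∧ ¬ G.Adj y z

namespace SimpleGraph.Walk

variable {V : Type} {G : SimpleGraph V} {x y : V}

lemma eq_or_eq_or_mem_walkInterior {p : G.Walk x y} {z : V} (hz : z ∈ p.support) :
    z = x ∨ z = y ∨ z ∈ walkInterior p := by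
  by_cases hx : z = x
  · exact Or.inl hx
  by_cases hy : z = y
  · exact Or.inr (Or.inl hy)
  exact Or.inr (Or.inr ⟨hz, hx, hy⟩)

lemma exists_getVert_eq_of_mem_walkInterior {p : G.Walk x y} {z : V}
    (hz : z ∈ walkInterior p) : ∃ i, 0 < i ∧ i < p.length ∧ p.getVert i = z := by
  obtain ⟨hz, hx, hy⟩ := hz
  obtain ⟨i, rfl, hi⟩ := mem_support_iff_exists_getVert.1 hz
  exact ⟨i, Nat.pos_of_ne_zero fun h => hx (h ▸ p.getVert_zero),
    hi.lt_of_ne fun h => hy (h ▸ p.getVert_length), rfl⟩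

lemma IsPath.getVert_mem_walkInterior {p : G.Walk x y} (hp : p.IsPath) {i : ℕ} (h0 : 0 < i)
    (hi : i < p.length) : p.getVert i ∈ walkInterior p :=
  ⟨p.getVert_mem_support i, by rw [Ne, hp.getVert_eq_start_iff hi.le]; omega,
    by rw [Ne, hp.getVert_eq_end_iff hi.le]; omega⟩

lemma IsPath.eq_or_eq_of_mk_mem_edges {p : G.Walk x y} (hp : p.IsPath) {i j : ℕ}
    (hi : i ≤ p.length) (hj : j ≤ p.length) (h : s(p.getVert i, p.getVert j) ∈ p.edges) :
    i + 1 = j ∨ j + 1 = i := by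
  obtain ⟨n, hn, he⟩ := p.mk_mem_edges_iff_exists.1 h
  have inj {a b : ℕ} (ha : a ≤ p.length) (hb : b ≤ p.length) (hab : p.getVert a = p.getVert b) :
      a = b := hp.getVert_injOn ha hb hab
  rcases Sym2.eq_iff.1 he with ⟨h1, h2⟩ | ⟨h1, h2⟩
  · have := inj (by omega) hi h1; have := inj (by omega) hj h2; omega
  · have := inj (by omega) hj h1; have := inj (by omega) hi h2; omega

lemma reachable_induce_of_getVert (p : G.Walk x y) {s : Set V} {i j : ℕ} (hij : i ≤ j)
    (hj : j ≤ p.length) (hs : ∀ n, i ≤ n → n ≤ j → p.getVert n ∈ s) {a b : s}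
    (ha : a.1 = p.getVert i) (hb : b.1 = p.getVert j) : (G.induce s).Reachable a b := by
  induction j, hij using Nat.le_induction generalizing b with
  | base => exact (Subtype.ext (ha.trans hb.symm) : a = b) ▸ Reachable.refl a
  | succ n hin ih =>
    refine (ih (by omega) (fun m h1 h2 => hs m h1 (by omega)) (b := ⟨_, hs n hin (by omega)⟩)
      rfl).trans (Adj.reachable ?_)
    change G.Adj _ b.1
    exact hb ▸ p.adj_getVert_succ (by omega)

end SimpleGraph.Walk

namespace Box

def StrictlyInside (a b : Box) : Prop :=
  b.x1 < a.x1 ∧ a.x2 < b.x2 ∧ b.y1 < a.y1 ∧ a.y2 < b.y2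

/-- The right side of `a` runs vertically through `b`, while the left side of `a` stays to the
left of `b`. -/
def Crosses (a b : Box) : Prop :=
  a.x1 < b.x1 ∧ b.x1 < a.x2 ∧ a.x2 < b.x2 ∧ a.y1 < b.y1 ∧ b.y2 < a.y2

variable {a b c : Box}

lemma StrictlyInside.asymm (h : a.StrictlyInside b) : ¬ b.StrictlyInside a :=
  fun h' => by linarith [h.1, h'.1]

lemma Crosses.corner_mem_region (h : a.Crosses b) : (b.x1, b.y1) ∈ a.region := by
  obtain ⟨h1, h2, -, h4, h5⟩ := h
  exact ⟨h1.le, h2.le, h4.le, by linarith [b.hy]⟩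

lemma mk_mem_frame {x y : ℝ} (hx : a.x1 ≤ x ∧ x ≤ a.x2) (hy : a.y1 ≤ y ∧ y ≤ a.y2)
    (h : x = a.x1 ∨ x = a.x2 ∨ y = a.y1 ∨ y = a.y2) : (x, y) ∈ a.frame :=
  ⟨⟨hx.1, hx.2, hy.1, hy.2⟩, h⟩

lemma strictlyInside_of_x1_lt (hd : Disjoint a.frame b.frame) {p : ℝ × ℝ} (ha : p ∈ a.region)
    (hb : p ∈ b.region) (hx : a.x1 < b.x1) : b.StrictlyInside a := by
  obtain ⟨a1, a2, a3, a4⟩ := ha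
  obtain ⟨b1, b2, b3, b4⟩ := hb
  have meet {x y : ℝ} : (x, y) ∈ a.frame → (x, y) ∉ b.frame := fun h => Set.disjoint_left.1 hd h
  have hy1 : a.y1 < b.y1 := by
    by_contra! h
    exact meet (mk_mem_frame ⟨hx.le, by linarith⟩ ⟨le_rfl, a.hy.le⟩ (by simp))
      (mk_mem_frame ⟨le_rfl, b.hx.le⟩ ⟨h, by linarith⟩ (by simp))
  have hy2 : b.y2 < a.y2 := by
    by_contra! h
    exact meet (mk_mem_frame ⟨hx.le, by linarith⟩ ⟨a.hy.le, le_rfl⟩ (by simp))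
      (mk_mem_frame ⟨le_rfl, b.hx.le⟩ ⟨by linarith, h⟩ (by simp))
  have hx2 : b.x2 < a.x2 := by
    by_contra! h
    exact meet (mk_mem_frame ⟨a.hx.le, le_rfl⟩ ⟨hy1.le, by linarith⟩ (by simp))
      (mk_mem_frame ⟨by linarith, h⟩ ⟨le_rfl, b.hy.le⟩ (by simp))
  exact ⟨hx, hx2, hy1, hy2⟩

lemma strictlyInside_or_strictlyInside (hd : Disjoint a.frame b.frame) {p : ℝ × ℝ}
    (ha : p ∈ a.region) (hb : p ∈ b.region) : a.StrictlyInside b ∨ b.StrictlyInside a := by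
  rcases lt_trichotomy a.x1 b.x1 with hx | hx | hx
  · exact Or.inr (strictlyInside_of_x1_lt hd ha hb hx)
  · obtain ⟨a1, a2, a3, a4⟩ := ha
    obtain ⟨b1, b2, b3, b4⟩ := hb
    exact (Set.disjoint_left.1 hd
      (mk_mem_frame ⟨le_rfl, a.hx.le⟩ ⟨le_max_left _ _, max_le a.hy.le (by linarith)⟩
        (Or.inl rfl))
      (mk_mem_frame ⟨hx.ge, by linarith [b.hx]⟩ ⟨le_max_right _ _, max_le (by linarith) b.hy.le⟩
        (Or.inl hx))).elim
  · exact Or.inl (strictlyInside_of_x1_lt hd.symm hb ha hx)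

lemma strictlyInside_of_frame_meets (hab : a.StrictlyInside b)
    (hac : (a.frame ∩ c.frame).Nonempty) (hcb : Disjoint c.frame b.frame) :
    c.StrictlyInside b := by
  obtain ⟨q, ⟨⟨a1, a2, a3, a4⟩, -⟩, hqc⟩ := hac
  obtain ⟨b1, b2, b3, b4⟩ := hab
  have hqb : q ∈ b.region := ⟨by linarith, by linarith, by linarith, by linarith⟩
  refine (strictlyInside_or_strictlyInside hcb hqc.1 hqb).resolve_right fun h => ?_
  obtain ⟨h1, h2, h3, h4⟩ := h
  rcases hqc.2 with h | h | h | h <;> linarith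

end Box

namespace IsFrameRepresentation

variable {V : Type} {G : SimpleGraph V} {F : V → Box} (hrep : IsFrameRepresentation G F)
include hrep

lemma disjoint_frame {u v : V} (huv : u ≠ v) (h : ¬ G.Adj u v) :
    Disjoint (F u).frame (F v).frame :=
  Set.disjoint_iff_inter_eq_empty.2 <|
    Set.not_nonempty_iff_eq_empty.1 fun hne => h ((hrep.adj_iff u v huv).2 hne)

lemma notMem_frame_of_mem_corners {u v : V} (huv : u ≠ v) {p : ℝ × ℝ}
    (hp : p ∈ (F u).corners) : p ∉ (F v).frame :=
  fun h => (hrep.corner_free u v huv).subset ⟨hp, h⟩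

lemma notMem_frame_of_mem_leftSide {u v : V} (huv : u ≠ v) {p : ℝ × ℝ}
    (hp : p ∈ (F u).leftSide) : p ∉ (F v).frame :=
  fun h => (hrep.left_free u v huv).subset ⟨hp, h⟩

lemma crosses_of_rightSide {u v : V} (huv : u ≠ v)
    (h : ((F u).rightSide ∩ (F v).frame).Nonempty) : (F u).Crosses (F v) := by
  obtain ⟨⟨q, ⟨hq1, u3, u4⟩, ⟨hq2, v1, v2⟩⟩, ⟨q', ⟨-, u3', u4'⟩, ⟨hq2', -, -⟩⟩⟩ :=
    hrep.right_cross u v huv h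
  set U := F u
  set D := F v
  rw [hq1] at v1 v2
  rw [hq2] at u3 u4
  rw [hq2'] at u3' u4'
  have hcU {x y : ℝ} (hc : (x, y) ∈ U.corners) : (x, y) ∉ D.frame :=
    hrep.notMem_frame_of_mem_corners huv hc
  have hcD {x y : ℝ} (hc : (x, y) ∈ D.corners) : (x, y) ∉ U.frame :=
    hrep.notMem_frame_of_mem_corners huv.symm hc
  refine ⟨?_, v1.lt_of_ne fun he => ?_, v2.lt_of_ne fun he => ?_, u3'.lt_of_ne fun he => ?_,
    u4.lt_of_ne fun he => ?_⟩
  · by_contra! hle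
    exact hrep.notMem_frame_of_mem_leftSide huv (p := (U.x1, D.y2)) ⟨rfl, u3, u4⟩
      (Box.mk_mem_frame ⟨hle, by linarith [U.hx]⟩ ⟨D.hy.le, le_rfl⟩ (Or.inr (Or.inr (Or.inr rfl))))
  · exact hcD (x := D.x1) (y := D.y1) (by simp [Box.corners])
      (Box.mk_mem_frame ⟨by linarith [U.hx], he.le⟩ ⟨u3', u4'⟩ (Or.inr (Or.inl he)))
  · exact hcD (x := D.x2) (y := D.y1) (by simp [Box.corners])
      (Box.mk_mem_frame ⟨by linarith [U.hx], he.ge⟩ ⟨u3', u4'⟩ (Or.inr (Or.inl he.symm)))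
  · exact hcU (x := U.x2) (y := U.y1) (by simp [Box.corners])
      (Box.mk_mem_frame ⟨v1, v2⟩ ⟨he.ge, by linarith [D.hy]⟩ (Or.inr (Or.inr (Or.inl he))))
  · exact hcU (x := U.x2) (y := U.y2) (by simp [Box.corners])
      (Box.mk_mem_frame ⟨v1, v2⟩ ⟨by linarith [D.hy], he.ge⟩ (Or.inr (Or.inr (Or.inr he.symm))))

/-- Left sides are excluded by (2), and two horizontal sides cannot meet without a corner of one
lying on the other. -/
lemma mem_rightSide_or_mem_rightSide {u v : V} (huv : u ≠ v) {p : ℝ × ℝ}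
    (hu : p ∈ (F u).frame) (hv : p ∈ (F v).frame) : p ∈ (F u).rightSide ∨ p ∈ (F v).rightSide := by
  have horizontal {u v : V} (huv : u ≠ v) (hu : p ∈ (F u).frame) (hv : p ∈ (F v).frame)
      (hr : p ∉ (F u).rightSide) : p.2 = (F u).y1 ∨ p.2 = (F u).y2 := by
    obtain ⟨⟨u1, u2, u3, u4⟩, hside⟩ := hu
    rcases hside with h | h | h
    · exact (hrep.notMem_frame_of_mem_leftSide huv ⟨h, u3, u4⟩ hv).elim
    · exact (hr ⟨h, u3, u4⟩).elim
    · exact h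
  have corner {u v : V} (huv : u ≠ v) (hu : p ∈ (F u).frame) (hv : p ∈ (F v).frame)
      (hhu : p.2 = (F u).y1 ∨ p.2 = (F u).y2) (hhv : p.2 = (F v).y1 ∨ p.2 = (F v).y2)
      (hx : (F u).x1 ≤ (F v).x1) : False := by
    obtain ⟨⟨u1, u2, u3, u4⟩, -⟩ := hu
    obtain ⟨⟨v1, v2, v3, v4⟩, -⟩ := hv
    refine hrep.notMem_frame_of_mem_corners huv.symm (p := ((F v).x1, p.2)) ?_
      (Box.mk_mem_frame ⟨hx, by linarith⟩ ⟨u3, u4⟩ (Or.inr (Or.inr hhu)))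
    rcases hhv with h | h <;> simp [Box.corners, h]
  by_contra! hr
  have hhu := horizontal huv hu hv hr.1
  have hhv := horizontal huv.symm hv hu hr.2
  rcases le_total (F u).x1 (F v).x1 with hx | hx
  · exact corner huv hu hv hhu hhv hx
  · exact corner huv.symm hv hu hhv hhu hx

lemma crosses_or_crosses {u v : V} (hadj : G.Adj u v) :
    (F u).Crosses (F v) ∨ (F v).Crosses (F u) := by
  obtain ⟨p, hu, hv⟩ := (hrep.adj_iff u v hadj.ne).1 hadj
  rcases hrep.mem_rightSide_or_mem_rightSide hadj.ne hu hv with h | h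
  · exact Or.inl (hrep.crosses_of_rightSide hadj.ne ⟨p, h, hv⟩)
  · exact Or.inr (hrep.crosses_of_rightSide hadj.ne.symm ⟨p, h, hu⟩)

lemma exists_strictlyInside {C : Set V} (hfin : C.Finite) (hne : C.Nonempty)
    (hC : G.CentersInducedCherries C) :
    ∃ u ∈ C, ∃ w ∉ closedNbhd G u, (F w).StrictlyInside (F u) := by
  obtain ⟨x, hx, hmax⟩ := Set.exists_max_image C (fun v => (F v).x2) hfin hne
  obtain ⟨y, hy, z, hz, hyz, hxy, hxz, hnyz⟩ := hC x hx
  have crosses_x {w : V} (hw : w ∈ C) (hxw : G.Adj x w) : (F w).Crosses (F x) :=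
    (hrep.crosses_or_crosses hxw).resolve_left fun h => (hmax w hw).not_gt h.2.2.1
  rcases Box.strictlyInside_or_strictlyInside (hrep.disjoint_frame hyz hnyz)
    (crosses_x hy hxy).corner_mem_region (crosses_x hz hxz).corner_mem_region with h | h
  · exact ⟨z, hz, y, notMem_closedNbhd_iff.2 ⟨hyz, fun h' => hnyz h'.symm⟩, h⟩
  · exact ⟨y, hy, z, notMem_closedNbhd_iff.2 ⟨hyz.symm, hnyz⟩, h⟩

lemma strictlyInside_of_not_hasFullStarCutset (hG : ¬ HasFullStarCutset G) {u w z : V}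
    (hw : w ∉ closedNbhd G u) (hwu : (F w).StrictlyInside (F u)) (hz : z ∉ closedNbhd G u) :
    (F z).StrictlyInside (F u) := by
  suffices ∀ {a b : ↥(closedNbhd G u)ᶜ}, (G.induce (closedNbhd G u)ᶜ).Walk a b →
      (F a).StrictlyInside (F u) → (F b).StrictlyInside (F u) from
    this ((not_not.1 fun h => hG ⟨u, h⟩) ⟨w, hw⟩ ⟨z, hz⟩).some hwu
  intro a b p
  induction p with
  | nil => exact id
  | @cons a b _ hab _ ih =>
    have hab : G.Adj a b := hab
    have hb := notMem_closedNbhd_iff.1 b.2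
    exact fun ha => ih (Box.strictlyInside_of_frame_meets ha ((hrep.adj_iff a b hab.ne).1 hab)
      (hrep.disjoint_frame hb.1 fun h => hb.2 h.symm))

end IsFrameRepresentation

lemma SimpleGraph.toMultigraph_m_of_adj {V : Type} {G : SimpleGraph V} {a b : V}
    (h : G.Adj a b) : G.toMultigraph.m a b = 1 :=
  if_pos h

lemma SimpleGraph.adj_of_fin_toMultigraph_m {V : Type} {G : SimpleGraph V} {a b : V}
    (i : Fin (G.toMultigraph.m a b)) : G.Adj a b := by
  by_contra h
  have := lt_of_lt_of_eq i.2 (if_neg h : G.toMultigraph.m a b = 0)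
  omega

lemma exists_fin_four_ne (a b c : Fin 4) : ∃ d, d ≠ a ∧ d ≠ b ∧ d ≠ c := by
  revert a b c
  decide

namespace MultiSubdivision

open SimpleGraph

section

variable {V W : Type} {G : SimpleGraph V} {H : SimpleGraph W} {k : ℕ}
  (S : MultiSubdivision G.toMultigraph H k)

/-- `G` is simple, so `0` is the only index of a parallel copy of the edge `ab`. -/
noncomputable def edgePath {a b : V} (h : G.Adj a b) : H.Walk (S.f a) (S.f b) :=
  S.path a b ⟨0, by rw [toMultigraph_m_of_adj h]; exact one_pos⟩

lemma path_eq_edgePath {a b : V} (i : Fin (G.toMultigraph.m a b)) :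
    S.path a b i = S.edgePath (adj_of_fin_toMultigraph_m i) := by
  have := lt_of_lt_of_eq i.2 (toMultigraph_m_of_adj (adj_of_fin_toMultigraph_m i))
  exact congrArg (S.path a b) (Fin.ext (Nat.lt_one_iff.1 this))

variable {a b a' b' : V}

lemma edgePath_symm (h : G.Adj a b) : S.edgePath h.symm = (S.edgePath h).reverse :=
  (S.path_eq_edgePath _).symm.trans (S.path_symm a b _)

lemma isPath_edgePath (h : G.Adj a b) : (S.edgePath h).IsPath := S.isPath a b _

lemma length_edgePath (h : G.Adj a b) : k + 1 ≤ (S.edgePath h).length := S.length_le a b _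

lemma f_notMem_walkInterior (h : G.Adj a b) (e : V) : S.f e ∉ walkInterior (S.edgePath h) :=
  S.interior_avoid a b _ e

lemma eq_of_mem_walkInterior (h : G.Adj a b) (h' : G.Adj a' b') {z : W}
    (hz : z ∈ walkInterior (S.edgePath h)) (hz' : z ∈ walkInterior (S.edgePath h')) :
    s(a, b) = s(a', b') := by
  rcases S.interior_disjoint a b _ a' b' _ ⟨z, hz, hz'⟩ with ⟨rfl, rfl, -⟩ | ⟨rfl, rfl, -⟩
  · rfl
  · exact Sym2.eq_swap

lemma mem_walkInterior_of_mem_support (h : G.Adj a b) (h' : G.Adj a' b') {z : W}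
    (hz : z ∈ walkInterior (S.edgePath h)) (hz' : z ∈ (S.edgePath h').support) :
    z ∈ walkInterior (S.edgePath h') :=
  ⟨hz', fun he => S.f_notMem_walkInterior h a' (he ▸ hz),
    fun he => S.f_notMem_walkInterior h b' (he ▸ hz)⟩

lemma notMem_support_of_mem_walkInterior (h : G.Adj a b) (h' : G.Adj a' b') {z : W}
    (hz : z ∈ walkInterior (S.edgePath h)) (hne : s(a, b) ≠ s(a', b')) :
    z ∉ (S.edgePath h').support :=
  fun hz' => hne (S.eq_of_mem_walkInterior h h' hz (S.mem_walkInterior_of_mem_support h h' hz hz'))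

lemma eq_f_or_mem_walkInterior (z : W) :
    (∃ e, S.f e = z) ∨ ∃ (a b : V) (h : G.Adj a b), z ∈ walkInterior (S.edgePath h) := by
  rcases S.vertex_cover z with he | ⟨a, b, i, hi⟩
  · exact Or.inl he
  · exact Or.inr ⟨a, b, _, S.path_eq_edgePath i ▸ hi⟩

lemma f_mem_support_edgePath_iff (h : G.Adj a b) {e : V} :
    S.f e ∈ (S.edgePath h).support ↔ e = a ∨ e = b := by
  refine ⟨fun he => ?_, by rintro (rfl | rfl) <;> simp⟩
  by_contra! hne
  exact S.f_notMem_walkInterior h e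
    ⟨he, fun h' => hne.1 (S.f.injective h'), fun h' => hne.2 (S.f.injective h')⟩

lemma eq_zero_or_eq_length_of_getVert_eq_f (h : G.Adj a b) {i : ℕ}
    (hi : i ≤ (S.edgePath h).length) {e : V} (he : (S.edgePath h).getVert i = S.f e) :
    i = 0 ∨ i = (S.edgePath h).length := by
  by_contra! hne
  exact S.f_notMem_walkInterior h e
    (he ▸ (S.isPath_edgePath h).getVert_mem_walkInterior (by omega) (by omega))

lemma exists_mem_edges {x y : W} (hxy : H.Adj x y) :
    ∃ (a b : V) (h : G.Adj a b), s(x, y) ∈ (S.edgePath h).edges := by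
  obtain ⟨a, b, i, hi⟩ := S.edge_cover s(x, y) hxy
  exact ⟨a, b, _, S.path_eq_edgePath i ▸ hi⟩

lemma mem_edges_of_mem_walkInterior (h : G.Adj a b) {x y : W}
    (hx : x ∈ walkInterior (S.edgePath h)) (hxy : H.Adj x y) :
    s(x, y) ∈ (S.edgePath h).edges := by
  obtain ⟨a', b', h', hmem⟩ := S.exists_mem_edges hxy
  have hx' := S.mem_walkInterior_of_mem_support h h' hx
    ((S.edgePath h').fst_mem_support_of_mem_edges hmem)
  rcases Sym2.eq_iff.1 (S.eq_of_mem_walkInterior h h' hx hx') with ⟨rfl, rfl⟩ | ⟨rfl, rfl⟩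
  · exact hmem
  · rwa [show S.edgePath h' = (S.edgePath h).reverse from S.edgePath_symm h, Walk.edges_reverse,
      List.mem_reverse] at hmem

lemma mem_support_of_adj_of_mem_walkInterior (h : G.Adj a b) {x y : W}
    (hx : x ∈ walkInterior (S.edgePath h)) (hxy : H.Adj x y) : y ∈ (S.edgePath h).support :=
  (S.edgePath h).snd_mem_support_of_mem_edges (S.mem_edges_of_mem_walkInterior h hx hxy)

lemma not_adj_f (hk : 1 ≤ k) (e e' : V) : ¬ H.Adj (S.f e) (S.f e') := by
  intro hadj
  obtain ⟨a, b, h, hmem⟩ := S.exists_mem_edges hadj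
  obtain ⟨i, hi, he⟩ := (S.edgePath h).mk_mem_edges_iff_exists.1 hmem
  have := S.length_edgePath h
  rcases Sym2.eq_iff.1 he with ⟨h1, h2⟩ | ⟨h1, h2⟩ <;>
  · have := S.eq_zero_or_eq_length_of_getVert_eq_f h (by omega) h1
    have := S.eq_zero_or_eq_length_of_getVert_eq_f h (by omega) h2
    omega

lemma adj_getVert_edgePath_iff (hk : 1 ≤ k) (h : G.Adj a b) {i j : ℕ}
    (hi : i ≤ (S.edgePath h).length) (hj : j ≤ (S.edgePath h).length) :
    H.Adj ((S.edgePath h).getVert i) ((S.edgePath h).getVert j) ↔ i + 1 = j ∨ j + 1 = i := by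
  set P := S.edgePath h
  refine ⟨fun hadj => ?_, by
    rintro (rfl | rfl)
    exacts [P.adj_getVert_succ (by omega), (P.adj_getVert_succ (by omega)).symm]⟩
  have hp := S.isPath_edgePath h
  by_cases hi' : 0 < i ∧ i < P.length
  · exact hp.eq_or_eq_of_mk_mem_edges hi hj
      (S.mem_edges_of_mem_walkInterior h (hp.getVert_mem_walkInterior hi'.1 hi'.2) hadj)
  by_cases hj' : 0 < j ∧ j < P.length
  · exact (hp.eq_or_eq_of_mk_mem_edges hj hi
      (S.mem_edges_of_mem_walkInterior h (hp.getVert_mem_walkInterior hj'.1 hj'.2) hadj.symm)).symm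
  have branch {n : ℕ} (hn : n ≤ P.length) (hn' : ¬ (0 < n ∧ n < P.length)) :
      ∃ e, P.getVert n = S.f e := by
    rcases (show n = 0 ∨ n = P.length by omega) with rfl | rfl
    exacts [⟨a, P.getVert_zero⟩, ⟨b, P.getVert_length⟩]
  obtain ⟨e, he⟩ := branch hi hi'
  obtain ⟨e', he'⟩ := branch hj hj'
  exact (S.not_adj_f hk e e' (he ▸ he' ▸ hadj)).elim

lemma getVert_notMem_closedNbhd_iff (hk : 1 ≤ k) (h : G.Adj a b) {i j : ℕ}
    (hi : i ≤ (S.edgePath h).length) (hj : j ≤ (S.edgePath h).length) :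
    (S.edgePath h).getVert i ∉ closedNbhd H ((S.edgePath h).getVert j) ↔
      i ≠ j ∧ i + 1 ≠ j ∧ j + 1 ≠ i := by
  rw [notMem_closedNbhd_iff, S.adj_getVert_edgePath_iff hk h hj hi,
    (S.isPath_edgePath h).getVert_injOn.ne_iff hi hj]
  omega

lemma exists_getVert_one_eq_of_adj_f {e : V} {y : W} (hadj : H.Adj (S.f e) y) :
    ∃ (b : V) (h : G.Adj e b), (S.edgePath h).getVert 1 = y := by
  obtain ⟨a', b', h', hmem⟩ := S.exists_mem_edges hadj
  obtain ⟨i, hi, he⟩ := (S.edgePath h').mk_mem_edges_iff_exists.1 hmem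
  rcases Sym2.eq_iff.1 he with ⟨h1, h2⟩ | ⟨h1, h2⟩
  · obtain rfl : i = 0 := by
      have := S.eq_zero_or_eq_length_of_getVert_eq_f h' hi.le h1; omega
    obtain rfl : a' = e := S.f.injective (by simpa using h1)
    exact ⟨b', h', h2⟩
  · have hi1 : i + 1 = (S.edgePath h').length := by
      have := S.eq_zero_or_eq_length_of_getVert_eq_f h' hi h2; omega
    obtain rfl : b' = e := S.f.injective (by rwa [hi1, Walk.getVert_length] at h2)
    refine ⟨a', h'.symm, ?_⟩
    rw [S.edgePath_symm h', Walk.getVert_reverse, ← h1]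
    congr 1
    omega

lemma eq_of_adj_f_of_adj_f (hk : 2 ≤ k) {x : W} {e e' : V} (he : H.Adj x (S.f e))
    (he' : H.Adj x (S.f e')) : e = e' := by
  obtain ⟨b, h, rfl⟩ := S.exists_getVert_one_eq_of_adj_f he.symm
  obtain ⟨c, h', hx⟩ := S.exists_getVert_one_eq_of_adj_f he'.symm
  have hl := S.length_edgePath h
  have hp := S.isPath_edgePath h
  have hint := hp.getVert_mem_walkInterior (i := 1) (by omega) (by omega)
  have hint' := S.mem_walkInterior_of_mem_support h h' hint (hx ▸ Walk.getVert_mem_support _ _)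
  rcases Sym2.eq_iff.1 (S.eq_of_mem_walkInterior h h' hint hint') with ⟨he, -⟩ | ⟨rfl, rfl⟩
  · exact he
  · rw [show S.edgePath h' = (S.edgePath h).reverse from S.edgePath_symm h,
      Walk.getVert_reverse] at hx
    have := hp.getVert_injOn (by rw [Set.mem_ofPred_eq]; omega) (by rw [Set.mem_ofPred_eq]; omega)
      hx
    omega

lemma notMem_closedNbhd_of_mem_walkInterior (h : G.Adj a b) {u z : W}
    (hz : z ∈ walkInterior (S.edgePath h)) (hu : u ∉ (S.edgePath h).support) :
    z ∉ closedNbhd H u :=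
  notMem_closedNbhd_iff.2 ⟨fun hzu => hu (hzu ▸ hz.1),
    fun hadj => hu (S.mem_support_of_adj_of_mem_walkInterior h hz hadj.symm)⟩

lemma support_subset_compl_closedNbhd (h : G.Adj a b) {u : W}
    (hu : u ∉ (S.edgePath h).support) (ha : S.f a ∉ closedNbhd H u)
    (hb : S.f b ∉ closedNbhd H u) : ∀ z ∈ (S.edgePath h).support, z ∉ closedNbhd H u := by
  intro z hz
  rcases Walk.eq_or_eq_or_mem_walkInterior hz with rfl | rfl | hz
  exacts [ha, hb, S.notMem_closedNbhd_of_mem_walkInterior h hz hu]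

lemma f_notMem_closedNbhd_of_mem_walkInterior (h : G.Adj a b) {u : W}
    (hu : u ∈ walkInterior (S.edgePath h)) {e : V} (hea : e ≠ a) (heb : e ≠ b) :
    S.f e ∉ closedNbhd H u := by
  refine notMem_closedNbhd_iff.2 ⟨fun he => S.f_notMem_walkInterior h e (he ▸ hu), fun hadj => ?_⟩
  rcases (S.f_mem_support_edgePath_iff h).1 (S.mem_support_of_adj_of_mem_walkInterior h hu hadj)
    with rfl | rfl
  exacts [hea rfl, heb rfl]

lemma adj_f_getVert_one (h : G.Adj a b) : H.Adj (S.f a) ((S.edgePath h).getVert 1) := by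
  simpa using (S.edgePath h).adj_getVert_succ (i := 0) (by have := S.length_edgePath h; omega)

lemma getVert_one_notMem_closedNbhd (hk : 1 ≤ k) {a b c : V} (hb : G.Adj a b) (hc : G.Adj a c)
    (hbc : b ≠ c) : (S.edgePath hb).getVert 1 ∉ closedNbhd H ((S.edgePath hc).getVert 1) := by
  have interior {d : V} (hd : G.Adj a d) :
      (S.edgePath hd).getVert 1 ∈ walkInterior (S.edgePath hd) :=
    (S.isPath_edgePath hd).getVert_mem_walkInterior one_pos (by have := S.length_edgePath hd; omega)
  exact S.notMem_closedNbhd_of_mem_walkInterior hb (interior hb)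
    (S.notMem_support_of_mem_walkInterior hc hb (interior hc) (Sym2.congr_right.not.2 hbc.symm))

lemma forall_le_or_forall_ge_getVert_notMem_closedNbhd (hk : 2 ≤ k) (h : G.Adj a b) {i : ℕ}
    (hi0 : 0 < i) (hil : i < (S.edgePath h).length) {u : W}
    (hz : (S.edgePath h).getVert i ∉ closedNbhd H u) :
    (∀ n ≤ i, (S.edgePath h).getVert n ∉ closedNbhd H u) ∨
      ∀ n, i ≤ n → n ≤ (S.edgePath h).length → (S.edgePath h).getVert n ∉ closedNbhd H u := by
  by_cases hu : u ∈ (S.edgePath h).support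
  · obtain ⟨m, rfl, hm⟩ := Walk.mem_support_iff_exists_getVert.1 hu
    have him := (S.getVert_notMem_closedNbhd_iff (by omega) h hil.le hm).1 hz
    rcases lt_or_gt_of_ne him.1 with him' | him'
    · exact Or.inl fun n hn => (S.getVert_notMem_closedNbhd_iff (by omega) h (by omega) hm).2
        (by omega)
    · exact Or.inr fun n hin hn => (S.getVert_notMem_closedNbhd_iff (by omega) h hn hm).2
        (by omega)
  have hint {n : ℕ} (h0 : 0 < n) (hn : n < (S.edgePath h).length) :
      (S.edgePath h).getVert n ∉ closedNbhd H u :=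
    S.notMem_closedNbhd_of_mem_walkInterior h
      ((S.isPath_edgePath h).getVert_mem_walkInterior h0 hn) hu
  have adj_of_mem {e : V} (he : S.f e ∈ closedNbhd H u) (hne : u ≠ S.f e) : H.Adj u (S.f e) := by
    by_contra hadj
    exact notMem_closedNbhd_iff.2 ⟨Ne.symm hne, hadj⟩ he
  by_cases ha : S.f a ∈ closedNbhd H u
  · have hb : S.f b ∉ closedNbhd H u := fun hb => h.ne (S.eq_of_adj_f_of_adj_f hk
      (adj_of_mem ha fun h' => hu (h' ▸ (S.edgePath h).start_mem_support))
      (adj_of_mem hb fun h' => hu (h' ▸ (S.edgePath h).end_mem_support)))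
    refine Or.inr fun n hin hn => (lt_or_eq_of_le hn).elim (hint (by omega)) fun hn => ?_
    rwa [hn, Walk.getVert_length]
  · refine Or.inl fun n hn => n.eq_zero_or_pos.elim (fun h0 => ?_) fun h0 => hint h0 (by omega)
    rwa [h0, Walk.getVert_zero]

end

variable {W : Type} {H : SimpleGraph W} {k : ℕ}
  (S : MultiSubdivision (⊤ : SimpleGraph (Fin 4)).toMultigraph H k)

lemma exists_index_covering_closedNbhd (hk : 2 ≤ k) (u : W) : ∃ θ : Fin 4,
    (∀ e, S.f e ∈ closedNbhd H u → e = θ) ∧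
      ∀ (a b : Fin 4) (h : a ≠ b), u ∈ (S.edgePath h).support → θ ∈ s(a, b) := by
  rcases S.eq_f_or_mem_walkInterior u with ⟨θ, rfl⟩ | ⟨γ, δ, hγδ, hu⟩
  · refine ⟨θ, fun e he => ?_,
      fun a b h hu => Sym2.mem_iff.2 ((S.f_mem_support_edgePath_iff h).1 hu)⟩
    by_contra hne
    exact notMem_closedNbhd_iff.2 ⟨fun h => hne (S.f.injective h), S.not_adj_f (by omega) θ e⟩ he
  obtain ⟨θ, hθ, hadj⟩ : ∃ θ ∈ s(γ, δ), ∀ e, H.Adj u (S.f e) → e = θ := by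
    by_cases hδ : H.Adj u (S.f δ)
    · exact ⟨δ, Sym2.mem_mk_right _ _, fun e he => S.eq_of_adj_f_of_adj_f hk he hδ⟩
    refine ⟨γ, Sym2.mem_mk_left _ _, fun e he => ?_⟩
    rcases (S.f_mem_support_edgePath_iff hγδ).1
      (S.mem_support_of_adj_of_mem_walkInterior hγδ hu he) with rfl | rfl
    exacts [rfl, (hδ he).elim]
  refine ⟨θ, fun e he => ?_, fun a b h hu' => ?_⟩
  · by_contra hne
    exact notMem_closedNbhd_iff.2 ⟨fun (h : S.f e = u) => S.f_notMem_walkInterior hγδ e (h ▸ hu),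
      fun h => hne (hadj e h)⟩ he
  · rwa [← S.eq_of_mem_walkInterior hγδ h hu (S.mem_walkInterior_of_mem_support hγδ h hu hu')]

def subdividedTriangle (θ : Fin 4) : Set W :=
  {z | ∃ (a b : Fin 4) (h : a ≠ b), a ≠ θ ∧ b ≠ θ ∧ z ∈ (S.edgePath h).support}

lemma subdividedTriangle_nonempty (θ : Fin 4) : (S.subdividedTriangle θ).Nonempty := by
  obtain ⟨a, ha, -, -⟩ := exists_fin_four_ne θ θ θ
  obtain ⟨b, hba, hbθ, -⟩ := exists_fin_four_ne a θ θ
  exact ⟨S.f a, a, b, hba.symm, ha, hbθ, Walk.start_mem_support _⟩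

lemma exists_subdividedTriangle_subset_compl_closedNbhd (hk : 2 ≤ k) (u : W) :
    ∃ θ, S.subdividedTriangle θ ⊆ (closedNbhd H u)ᶜ := by
  obtain ⟨θ, hbranch, hpath⟩ := S.exists_index_covering_closedNbhd hk u
  refine ⟨θ, ?_⟩
  rintro z ⟨a, b, h, ha, hb, hz⟩
  have hu : u ∉ (S.edgePath h).support := fun hu => by
    rcases Sym2.mem_iff.1 (hpath a b h hu) with rfl | rfl
    exacts [ha rfl, hb rfl]
  exact S.support_subset_compl_closedNbhd h hu (fun h' => ha (hbranch a h'))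
    (fun h' => hb (hbranch b h')) z hz

lemma getVert_mem_subdividedTriangle {θ a b : Fin 4} (h : a ≠ b) (ha : a ≠ θ) (hb : b ≠ θ)
    (i : ℕ) : (S.edgePath h).getVert i ∈ S.subdividedTriangle θ :=
  ⟨a, b, h, ha, hb, Walk.getVert_mem_support _ _⟩

lemma exists_cherry_f (hk : 1 ≤ k) {θ a : Fin 4} (ha : a ≠ θ) :
    ∃ y ∈ S.subdividedTriangle θ, ∃ z ∈ S.subdividedTriangle θ,
      y ≠ z ∧ H.Adj (S.f a) y ∧ H.Adj (S.f a) z ∧ ¬ H.Adj y z := by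
  obtain ⟨b, hba, hbθ, -⟩ := exists_fin_four_ne a θ θ
  obtain ⟨c, hca, hcb, hcθ⟩ := exists_fin_four_ne a b θ
  have hbc := notMem_closedNbhd_iff.1
    (S.getVert_one_notMem_closedNbhd hk hba.symm hca.symm hcb.symm)
  exact ⟨_, S.getVert_mem_subdividedTriangle hba.symm ha hbθ 1,
    _, S.getVert_mem_subdividedTriangle hca.symm ha hcθ 1, hbc.1,
    S.adj_f_getVert_one hba.symm, S.adj_f_getVert_one hca.symm, fun h => hbc.2 h.symm⟩

lemma centersInducedCherries_subdividedTriangle (hk : 1 ≤ k) (θ : Fin 4) :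
    H.CentersInducedCherries (S.subdividedTriangle θ) := by
  rintro z ⟨a, b, h, ha, hb, hz⟩
  rcases Walk.eq_or_eq_or_mem_walkInterior hz with rfl | rfl | hz
  · exact S.exists_cherry_f hk ha
  · exact S.exists_cherry_f hk hb
  obtain ⟨i, hi0, hil, rfl⟩ := Walk.exists_getVert_eq_of_mem_walkInterior hz
  have hyz := notMem_closedNbhd_iff.1 ((S.getVert_notMem_closedNbhd_iff hk h
    (i := i - 1) (j := i + 1) (by omega) (by omega)).2 (by omega))
  refine ⟨_, S.getVert_mem_subdividedTriangle h ha hb (i - 1),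
    _, S.getVert_mem_subdividedTriangle h ha hb (i + 1), hyz.1, ?_,
    (S.edgePath h).adj_getVert_succ hil, fun h' => hyz.2 h'.symm⟩
  have := (S.edgePath h).adj_getVert_succ (i := i - 1) (by omega)
  rw [Nat.sub_add_cancel hi0] at this
  exact this.symm

lemma reachable_f_f {u : W} {e e' : Fin 4} (he : S.f e ∉ closedNbhd H u)
    (he' : S.f e' ∉ closedNbhd H u) :
    (H.induce (closedNbhd H u)ᶜ).Reachable ⟨S.f e, he⟩ ⟨S.f e', he'⟩ := by
  have along {a b : Fin 4} (h : a ≠ b) (hu : u ∉ (S.edgePath h).support)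
      (ha : S.f a ∉ closedNbhd H u) (hb : S.f b ∉ closedNbhd H u) :
      (H.induce (closedNbhd H u)ᶜ).Reachable ⟨S.f a, ha⟩ ⟨S.f b, hb⟩ :=
    (S.edgePath h).reachable_induce_of_getVert (Nat.zero_le _) le_rfl
      (fun n _ _ => S.support_subset_compl_closedNbhd h hu ha hb _ (Walk.getVert_mem_support _ n))
      (Walk.getVert_zero _).symm (Walk.getVert_length _).symm
  by_cases hee : e = e'
  · subst hee
    rfl
  by_cases hu : u ∈ (S.edgePath hee).support
  swap
  · exact along hee hu he he'
  -- `u` lies inside the path from `e` to `e'`: go around it through a third branch vertex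
  have hu' : u ∈ walkInterior (S.edgePath hee) :=
    ⟨hu, fun h => (notMem_closedNbhd_iff.1 he).1 h.symm,
      fun h => (notMem_closedNbhd_iff.1 he').1 h.symm⟩
  obtain ⟨ε, hεe, hεe', -⟩ := exists_fin_four_ne e e' e
  have hε := S.f_notMem_closedNbhd_of_mem_walkInterior hee hu' hεe hεe'
  exact (along (Ne.symm hεe) (S.notMem_support_of_mem_walkInterior hee _ hu'
      (Sym2.congr_right.not.2 hεe'.symm)) he hε).trans
    (along hεe' (S.notMem_support_of_mem_walkInterior hee _ hu'
      (Sym2.congr_left.not.2 hεe.symm)) hε he')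

lemma exists_reachable_f (hk : 2 ≤ k) {u z : W} (hz : z ∉ closedNbhd H u) :
    ∃ (e : Fin 4) (he : S.f e ∉ closedNbhd H u),
      (H.induce (closedNbhd H u)ᶜ).Reachable ⟨S.f e, he⟩ ⟨z, hz⟩ := by
  rcases S.eq_f_or_mem_walkInterior z with ⟨e, rfl⟩ | ⟨a, b, h, hzP⟩
  · exact ⟨e, hz, .rfl⟩
  obtain ⟨i, hi0, hil, rfl⟩ := Walk.exists_getVert_eq_of_mem_walkInterior hzP
  rcases S.forall_le_or_forall_ge_getVert_notMem_closedNbhd hk h hi0 hil hz with hs | hs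
  · have ha := hs 0 (Nat.zero_le i)
    rw [Walk.getVert_zero] at ha
    exact ⟨a, ha, (S.edgePath h).reachable_induce_of_getVert (Nat.zero_le i) hil.le
      (fun n _ hn => hs n hn) (Walk.getVert_zero _).symm rfl⟩
  · have hb := hs _ hil.le le_rfl
    rw [Walk.getVert_length] at hb
    exact ⟨b, hb, ((S.edgePath h).reachable_induce_of_getVert hil.le le_rfl hs rfl
      (Walk.getVert_length _).symm).symm⟩

include S in
lemma not_hasFullStarCutset (hk : 2 ≤ k) : ¬ HasFullStarCutset H := by
  rintro ⟨u, hu⟩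
  refine hu fun ⟨x, hx⟩ ⟨y, hy⟩ => ?_
  obtain ⟨e, he, hxe⟩ := S.exists_reachable_f hk hx
  obtain ⟨e', he', hye⟩ := S.exists_reachable_f hk hy
  exact hxe.symm.trans ((S.reachable_f_f he he').trans hye)

end MultiSubdivision

/-- No `≥2`-subdivision of `K₄` is a restricted frame graph. -/
theorem no_ge_two_subdivision_K4_isRestrictedFrameGraph
    {W : Type} [Fintype W] (H : SimpleGraph W)
    (hsub : IsSubdivisionGE (⊤ : SimpleGraph (Fin 4)).toMultigraph 2 H) :
    ¬ IsRestrictedFrameGraph H := by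
  rintro ⟨F, hrep⟩
  obtain ⟨S⟩ := hsub
  have big (v : W) :
      ∃ u ∉ closedNbhd H v, ∀ z ∉ closedNbhd H u, (F z).StrictlyInside (F u) := by
    obtain ⟨θ, hθ⟩ := S.exists_subdividedTriangle_subset_compl_closedNbhd le_rfl v
    obtain ⟨u, hu, w, hw, hwu⟩ := hrep.exists_strictlyInside (Set.toFinite _)
      (S.subdividedTriangle_nonempty θ) (S.centersInducedCherries_subdividedTriangle one_le_two θ)
    exact ⟨u, hθ hu, fun z => hrep.strictlyInside_of_not_hasFullStarCutset
      (S.not_hasFullStarCutset le_rfl) hw hwu⟩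
  obtain ⟨u, -, hu⟩ := big (S.f 0)
  obtain ⟨u', hu'u, hu'⟩ := big u
  exact (hu u' hu'u).asymm (hu' u (notMem_closedNbhd_comm.1 hu'u))
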